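/- For each k ∈ {4, 8, 12}, with τ = σ∘g : {1,2}* → S_k and f = f_k, there exists a permutation φ in the symmetric group S_k on Σ_k such that φ·τ(f(a))·φ⁻¹ = τ(a) for each letter a ∈ {1,2}. -/

import Mathlib

/-- The encodability conditions for a word `w` over `Σ_k = Fin k`: `w` contains at
least `k - 1` distinct letters, every factor of length `k - 2` has `k - 2` distinct
letters, and every factor of length `k` contains at least `k - 1` distinct letters. -/
def EncodabilityConditions (k : ℕ) (w : List (Fin k)) : Prop :=
  k - 1 ≤ w.toFinset.card ∧
  (∀ x : List (Fin k), x <:+: w → x.length = k - 2 → x.Nodup) ∧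
  (∀ x : List (Fin k), x <:+: w → x.length = k → k - 1 ≤ x.toFinset.card)

/-- `r` is the ranking permutation of `Σ_k = Fin k` (0-based: the paper's `r[j]` is
`r (j-1)`) determined by the word `p`: the word `r 2, r 3, …, r (k-1)` is the
length-`(k-2)` suffix of `p`, and of the two remaining letters, `r 1` is the one whose
last occurrence in `p` is later (`r 0` possibly not occurring in `p` at all); here a
letter occurring later in `p` has a smaller index in `p.reverse` (a letter not
occurring at all having index `p.length` there). -/
def IsRanking (k : ℕ) (hk : 2 ≤ k) (p : List (Fin k)) (r : Equiv.Perm (Fin k)) : Prop :=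
  (List.ofFn fun j : Fin (k - 2) => r ⟨(j : ℕ) + 2, by have := j.isLt; omega⟩) <:+ p ∧
  p.reverse.idxOf (r ⟨1, by omega⟩) < p.reverse.idxOf (r ⟨0, by omega⟩)

/-- The permutation `σ(j+1)` of the paper (0-based `j : Fin 3`), as a function on
`Fin k`: it fixes the letters `< j` and cyclically shifts the letters in `[j, k)` by
one (for `k ≥ 4`, `(j : ℕ) % k = j`). -/
def sigmaStep (k : ℕ) (j : Fin 3) : Fin k → Fin k := fun x =>
  if (x : ℕ) < (j : ℕ) then x
  else if h : (x : ℕ) + 1 < k then ⟨(x : ℕ) + 1, h⟩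
  else ⟨(j : ℕ) % k, Nat.mod_lt _ x.pos⟩

/-- The morphism `σ : {1,2,3}* → S_k` applied to a word, as a function on `Fin k`
(with `(f * g) x = f (g x)`, i.e. `σ(t₁⋯tₙ) = σ(t₁) ∘ ⋯ ∘ σ(tₙ)`). -/
def sigmaWord (k : ℕ) (ts : List (Fin 3)) : Fin k → Fin k :=
  ts.foldr (fun j acc => sigmaStep k j ∘ acc) id

/-- The word `x` has period `q`: `x_{i+q} = x_i` whenever both positions exist. -/
def HasPeriod {A : Type*} (x : List A) (q : ℕ) : Prop :=
  ∀ (i : ℕ) (h : i + q < x.length), x.get ⟨i + q, h⟩ = x.get ⟨i, by omega⟩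

/-- The binary morphisms `f₄`, `f₈`, `f₁₂` of the paper (the letters `1, 2` of the
paper are encoded as `0, 1 : Fin 2`):
`f₄(1)=121, f₄(2)=122`; `f₈(1)=121212112122121, f₈(2)=211212122122112`;
`f₁₂(1)=121212121211212122121, f₁₂(2)=212122112121121212212`. -/
def fBlocks : ℕ → Fin 2 → List (Fin 2)
  | 4 => fun a => if a = 0 then [0,1,0] else [0,1,1]
  | 8 => fun a => if a = 0 then [0,1,0,1,0,1,0,0,1,0,1,1,0,1,0]
                  else [1,0,0,1,0,1,0,1,1,0,1,1,0,0,1]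
  | 12 => fun a => if a = 0 then [0,1,0,1,0,1,0,1,0,1,0,0,1,0,1,0,1,1,0,1,0]
                   else [1,0,1,0,1,1,0,0,1,0,1,0,0,1,0,1,0,1,1,0,1]
  | _ => fun _ => []

/-- The morphism `g : {1,2}* → {1,2,3}*` with `g(1) = 31` and `g(2) = 312`
(letters `1,2,3` of the paper encoded as `0,1,2 : Fin 3`). -/
def gBlock : Fin 2 → List (Fin 3)
  | 0 => [2, 0]
  | 1 => [2, 0, 1]

/-- In the paper's notation, with `τ = σ ∘ g`: `φ · τ(f_k(a)) · φ⁻¹ = τ(a)` for both letters `a`. -/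
def ConjugatesTauComp (k : ℕ) (φ : Equiv.Perm (Fin k)) : Prop :=
  ∀ a : Fin 2, ⇑φ ∘ sigmaWord k ((fBlocks k a).map gBlock).flatten ∘ ⇑φ.symm =
    sigmaWord k (gBlock a)

/- Each `τ(f_k(a))` has the cycle type of `τ(a)`, so each letter separately admits a conjugator;
the witnesses below match the cycles for both letters at once. -/

def conjugator₄ : Equiv.Perm (Fin 4) :=
  ⟨![0, 3, 1, 2], ![0, 2, 3, 1], by decide, by decide⟩

def conjugator₈ : Equiv.Perm (Fin 8) :=
  ⟨![2, 7, 4, 5, 3, 6, 0, 1], ![6, 7, 0, 4, 2, 3, 5, 1], by decide, by decide⟩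

def conjugator₁₂ : Equiv.Perm (Fin 12) :=
  ⟨![5, 3, 9, 1, 11, 0, 7, 4, 10, 6, 8, 2], ![5, 3, 11, 1, 7, 0, 9, 6, 10, 2, 8, 4],
    by decide, by decide⟩

theorem conjugatesTauComp_conjugator₄ : ConjugatesTauComp 4 conjugator₄ := by
  unfold ConjugatesTauComp; decide

set_option maxRecDepth 10000 in
theorem conjugatesTauComp_conjugator₈ : ConjugatesTauComp 8 conjugator₈ := by
  unfold ConjugatesTauComp; decide

set_option maxRecDepth 10000 in
theorem conjugatesTauComp_conjugator₁₂ : ConjugatesTauComp 12 conjugator₁₂ := by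
  unfold ConjugatesTauComp; decide

theorem algebraic_property_general (k : ℕ) (hk' : k = 4 ∨ k = 8 ∨ k = 12) :
    ∃ φ : Equiv.Perm (Fin k), ∀ a : Fin 2,
      ⇑φ ∘ sigmaWord k ((fBlocks k a).map gBlock).flatten ∘ ⇑φ.symm =
        sigmaWord k (gBlock a) := by
  obtain rfl | rfl | rfl := hk'
  · exact ⟨conjugator₄, conjugatesTauComp_conjugator₄⟩
  · exact ⟨conjugator₈, conjugatesTauComp_conjugator₈⟩
  · exact ⟨conjugator₁₂, conjugatesTauComp_conjugator₁₂⟩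

/-- For each `k ∈ {4, 8, 12}`, with `τ = σ ∘ g` and `f = f_k`, there is a permutation
`φ ∈ S_k` with `φ · τ(f(a)) · φ⁻¹ = τ(a)` for each letter `a ∈ {1, 2}`. -/
theorem algebraic_property (k : ℕ) (hk : 4 ≤ k) (hk' : k = 4 ∨ k = 8 ∨ k = 12) :
    ∃ φ : Equiv.Perm (Fin k), ∀ a : Fin 2,
      ⇑φ ∘ sigmaWord k ((fBlocks k a).map gBlock).flatten ∘ ⇑φ.symm =
        sigmaWord k (gBlock a) :=
  algebraic_property_general k hk'
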